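/- Let A be a finite set and let H ⊆ A × A be the edge set of a directed graph on A. A subset C ⊆ A × A is a maximal child of H if and only if: C ⊆ H, C contains every bridge edge of H, and for every strongly connected component S of H, the set C ∩ (S × S) is a maximal child of H ∩ (S × S). (Equivalently: the maximal children of H are exactly the sets consisting of all bridge edges of H together with, for each strongly connected component S of H, a maximal child of the edge set H ∩ (S × S).) -/

import Mathlib

/-- The edge relation of an edge set `E ⊆ A × A`. -/
def EdgeRel {A : Type*} (E : Set (A × A)) : A → A → Prop := fun u v => (u, v) ∈ E

/-- An edge set is acyclic if no vertex has a path of length ≥ 1 back to itself. -/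
def AcyclicEdges {A : Type*} (E : Set (A × A)) : Prop :=
  ∀ a : A, ¬ Relation.TransGen (EdgeRel E) a a

/-- Two vertices are strongly connected in `E` if they are equal or there are paths
of length ≥ 1 both ways. -/
def StronglyConn {A : Type*} (E : Set (A × A)) (u v : A) : Prop :=
  u = v ∨ (Relation.TransGen (EdgeRel E) u v ∧ Relation.TransGen (EdgeRel E) v u)

/-- `S` is a strongly connected component of `E`: an equivalence class of the
strongly-connected relation. -/
def IsSCC {A : Type*} (E : Set (A × A)) (S : Set A) : Prop :=
  ∃ a : A, S = {b : A | StronglyConn E a b}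

/-- The bridge edges of `E`: edges whose endpoints are not strongly connected in `E`. -/
def BridgeEdges {A : Type*} (E : Set (A × A)) : Set (A × A) :=
  {e | e ∈ E ∧ ¬ StronglyConn E e.1 e.2}

/-- `C` is a maximal child of the directed graph with edge set `H`. -/
def MaximalChild {A : Type*} (H C : Set (A × A)) : Prop :=
  C ⊆ H ∧ AcyclicEdges C ∧ ∀ e ∈ H \ C, ¬ AcyclicEdges (C ∪ {e})


/-!
An acyclic `C ⊆ H` is maximal exactly when every edge `(u, v)` of `H` outside `C` is closed into
a cycle by a `C`-path from `v` to `u`. Such a path, together with the edge, shows `u` and `v`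
strongly connected in `H`, so a maximal child contains every bridge; and a `C`-path between two
vertices of a strongly connected component of `H` never leaves that component, so both
acyclicity and the closing paths can be checked component by component.
-/

open Relation

section

variable {A : Type*} {C E F H : Set (A × A)} {a u v x y : A}

def scc (E : Set (A × A)) (a : A) : Set A := {b | StronglyConn E a b}

lemma EdgeRel.mono (h : E ⊆ F) : EdgeRel E ≤ EdgeRel F := fun _ _ he => h he

lemma AcyclicEdges.mono (h : E ⊆ F) (hF : AcyclicEdges F) : AcyclicEdges E :=
  fun a ha => hF a (TransGen.mono (EdgeRel.mono h) _ _ ha)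

namespace StronglyConn

lemma symm (h : StronglyConn E u v) : StronglyConn E v u := by
  rcases h with rfl | ⟨huv, hvu⟩
  · exact Or.inl rfl
  · exact Or.inr ⟨hvu, huv⟩

lemma trans (huv : StronglyConn E u v) (hvx : StronglyConn E v x) : StronglyConn E u x := by
  rcases huv with rfl | ⟨huv, hvu⟩
  · exact hvx
  · rcases hvx with rfl | ⟨hvx, hxv⟩
    · exact Or.inr ⟨huv, hvu⟩
    · exact Or.inr ⟨huv.trans hvx, hxv.trans hvu⟩

lemma reflTransGen (h : StronglyConn E u v) : ReflTransGen (EdgeRel E) u v := by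
  rcases h with rfl | ⟨huv, -⟩
  · exact ReflTransGen.refl
  · exact huv.to_reflTransGen

lemma of_reflTransGen (huv : ReflTransGen (EdgeRel E) u v) (hvu : ReflTransGen (EdgeRel E) v u) :
    StronglyConn E u v := by
  rcases reflTransGen_iff_eq_or_transGen.mp huv with rfl | huv
  · exact Or.inl rfl
  · rcases reflTransGen_iff_eq_or_transGen.mp hvu with rfl | hvu
    · exact Or.inl rfl
    · exact Or.inr ⟨huv, hvu⟩

end StronglyConn

lemma mem_scc_self : a ∈ scc E a := Or.inl rfl

lemma mem_scc_of_reflTransGen (hx : x ∈ scc E a) (hy : y ∈ scc E a)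
    (hxu : ReflTransGen (EdgeRel E) x u) (huy : ReflTransGen (EdgeRel E) u y) : u ∈ scc E a :=
  have hyx : ReflTransGen (EdgeRel E) y x := (hy.symm.trans hx).reflTransGen
  hx.trans (StronglyConn.of_reflTransGen hxu (huy.trans hyx))

lemma reflTransGen_inter_scc (hCH : C ⊆ H) (hx : x ∈ scc H a) (hy : y ∈ scc H a)
    (h : ReflTransGen (EdgeRel C) x y) :
    ReflTransGen (EdgeRel (C ∩ scc H a ×ˢ scc H a)) x y := by
  induction h using ReflTransGen.head_induction_on with
  | refl => exact ReflTransGen.refl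
  | @head x z hxz hzy ih =>
    have hz : z ∈ scc H a := mem_scc_of_reflTransGen hx hy
      (ReflTransGen.single (hCH hxz)) (ReflTransGen.mono (EdgeRel.mono hCH) _ _ hzy)
    exact (ih hz).head ⟨hxz, hx, hz⟩

lemma transGen_inter_scc (hCH : C ⊆ H) (hx : x ∈ scc H a) (hy : y ∈ scc H a)
    (h : TransGen (EdgeRel C) x y) :
    TransGen (EdgeRel (C ∩ scc H a ×ˢ scc H a)) x y := by
  obtain ⟨z, hxz, hzy⟩ := TransGen.head'_iff.mp h
  have hz : z ∈ scc H a := mem_scc_of_reflTransGen hx hy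
    (ReflTransGen.single (hCH hxz)) (ReflTransGen.mono (EdgeRel.mono hCH) _ _ hzy)
  exact TransGen.head' ⟨hxz, hx, hz⟩ (reflTransGen_inter_scc hCH hz hy hzy)

lemma acyclicEdges_iff_forall_scc (hCH : C ⊆ H) :
    AcyclicEdges C ↔ ∀ a, AcyclicEdges (C ∩ scc H a ×ˢ scc H a) :=
  ⟨fun hC _ => hC.mono Set.inter_subset_left,
    fun h a ha => h a a (transGen_inter_scc hCH mem_scc_self mem_scc_self ha)⟩

lemma transGen_union_singleton {b : A} (h : TransGen (EdgeRel (C ∪ {(u, v)})) a b) :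
    TransGen (EdgeRel C) a b ∨
      ReflTransGen (EdgeRel C) a u ∧ ReflTransGen (EdgeRel C) v b := by
  induction h with
  | single h =>
    rcases h with h | h
    · exact Or.inl (TransGen.single h)
    · obtain ⟨rfl, rfl⟩ := Prod.ext_iff.mp h
      exact Or.inr ⟨ReflTransGen.refl, ReflTransGen.refl⟩
  | tail _ h ih =>
    rcases h with h | h
    · rcases ih with ih | ⟨hau, hvb⟩
      · exact Or.inl (ih.tail h)
      · exact Or.inr ⟨hau, hvb.tail h⟩
    · obtain ⟨rfl, rfl⟩ := Prod.ext_iff.mp h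
      rcases ih with ih | ⟨hau, -⟩
      · exact Or.inr ⟨ih.to_reflTransGen, ReflTransGen.refl⟩
      · exact Or.inr ⟨hau, ReflTransGen.refl⟩

lemma AcyclicEdges.not_union_singleton_iff (hC : AcyclicEdges C) :
    ¬ AcyclicEdges (C ∪ {(u, v)}) ↔ ReflTransGen (EdgeRel C) v u := by
  refine ⟨fun h => ?_, fun hvu hacyc => hacyc u ?_⟩
  · obtain ⟨a, ha⟩ := not_forall_not.mp h
    rcases transGen_union_singleton ha with ha | ⟨hau, hva⟩
    · exact absurd ha (hC a)
    · exact hva.trans hau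
  · exact TransGen.head' (Or.inr rfl)
      (ReflTransGen.mono (EdgeRel.mono Set.subset_union_left) _ _ hvu)

lemma maximalChild_iff_reflTransGen :
    MaximalChild H C ↔ C ⊆ H ∧ AcyclicEdges C ∧
      ∀ u v, (u, v) ∈ H → (u, v) ∉ C → ReflTransGen (EdgeRel C) v u := by
  refine and_congr_right fun _ => ?_
  refine ⟨fun ⟨hC, hmax⟩ => ⟨hC, fun u v huv hC' => ?_⟩, fun ⟨hC, hpath⟩ => ⟨hC, ?_⟩⟩
  · exact hC.not_union_singleton_iff.mp (hmax _ ⟨huv, hC'⟩)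
  · rintro ⟨u, v⟩ ⟨huv, hC'⟩
    exact hC.not_union_singleton_iff.mpr (hpath u v huv hC')

end

theorem maximalChild_iff_bridges_and_scc_general {A : Type*}
    (H C : Set (A × A)) :
    MaximalChild H C ↔
      C ⊆ H ∧ BridgeEdges H ⊆ C ∧
        ∀ S : Set A, IsSCC H S → MaximalChild (H ∩ S ×ˢ S) (C ∩ S ×ˢ S) := by
  simp only [maximalChild_iff_reflTransGen]
  constructor
  · rintro ⟨hCH, hC, hpath⟩
    refine ⟨hCH, fun ⟨u, v⟩ ⟨huv, hbridge⟩ => by_contra fun hC' => hbridge ?_, ?_⟩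
    · exact StronglyConn.of_reflTransGen (ReflTransGen.single huv)
        (ReflTransGen.mono (EdgeRel.mono hCH) _ _ (hpath u v huv hC'))
    rintro S ⟨a, rfl⟩
    refine ⟨Set.inter_subset_inter_left _ hCH, hC.mono Set.inter_subset_left, ?_⟩
    rintro u v ⟨huv, hu, hv⟩ hC'
    exact reflTransGen_inter_scc hCH hv hu (hpath u v huv fun h => hC' ⟨h, hu, hv⟩)
  · rintro ⟨hCH, hbridges, hscc⟩
    refine ⟨hCH, (acyclicEdges_iff_forall_scc hCH).mpr fun a => (hscc _ ⟨a, rfl⟩).2.1, ?_⟩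
    intro u v huv hC'
    have hv : v ∈ scc H u := by_contra fun hv => hC' (hbridges ⟨huv, hv⟩)
    exact ReflTransGen.mono (EdgeRel.mono Set.inter_subset_left) _ _
      ((hscc _ ⟨u, rfl⟩).2.2 u v ⟨huv, mem_scc_self, hv⟩ fun h => hC' h.1)

theorem maximalChild_iff_bridges_and_scc {A : Type*} [Fintype A]
    (H C : Set (A × A)) :
    MaximalChild H C ↔
      C ⊆ H ∧ BridgeEdges H ⊆ C ∧
        ∀ S : Set A, IsSCC H S → MaximalChild (H ∩ S ×ˢ S) (C ∩ S ×ˢ S) :=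
  maximalChild_iff_bridges_and_scc_general H C
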